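/- Let D be a ghost-free diagram in which every column contains at most one cell. Then MaxG(D) ≤ sf(D). -/

import Mathlib

open Finset

/-- A diagram: a finite set of cells in ℕ×ℕ (recorded as (row, column)),
some of which may be marked as ghost cells. -/
structure Diagram where
  cells : Finset (ℕ × ℕ)
  ghosts : Finset (ℕ × ℕ)
deriving DecidableEq

/-- `(r,c)` is the rightmost cell (ghost or not) in row `r` of `D`. -/
def Rightmost (D : Diagram) (r c : ℕ) : Prop :=
  (r, c) ∈ D.cells ∧ ∀ c' > c, (r, c') ∉ D.cells

/-- A nontrivial K-Kohnert move at row `r` of `D` is possible, taking the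
rightmost cell `(r,c)` of row `r` (a non-ghost cell) down to the highest empty
position `(rhat, c)` below it in column `c`, with no ghost cell in between. -/
def KohnertMovable (D : Diagram) (r c rhat : ℕ) : Prop :=
  Rightmost D r c ∧ (r, c) ∉ D.ghosts ∧
  1 ≤ rhat ∧ rhat < r ∧ (rhat, c) ∉ D.cells ∧
  ∀ r', rhat < r' → r' < r → (r', c) ∈ D.cells ∧ (r', c) ∉ D.ghosts

/-- Result of a Kohnert move: the cell `(r,c)` moves to `(rhat,c)`. -/
def applyKohnert (D : Diagram) (r c rhat : ℕ) : Diagram :=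
  ⟨insert (rhat, c) (D.cells.erase (r, c)), D.ghosts⟩

/-- Result of a ghost move: the cell `(r,c)` moves to `(rhat,c)`, leaving a
ghost cell at `(r,c)`. -/
def applyGhost (D : Diagram) (r c rhat : ℕ) : Diagram :=
  ⟨insert (rhat, c) D.cells, insert (r, c) D.ghosts⟩

/-- One (nontrivial) K-Kohnert move. -/
def KStep (D T : Diagram) : Prop :=
  ∃ r c rhat, KohnertMovable D r c rhat ∧
    (T = applyKohnert D r c rhat ∨ T = applyGhost D r c rhat)

/-- One (nontrivial) ghost move. -/
def GStep (D T : Diagram) : Prop :=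
  ∃ r c rhat, KohnertMovable D r c rhat ∧ T = applyGhost D r c rhat

/-- All diagrams obtainable from `D` by sequences of K-Kohnert moves. -/
def KKD (D : Diagram) : Set Diagram := {T | Relation.ReflTransGen KStep D T}

/-- All diagrams obtainable from `D` by sequences of ghost moves. -/
def GKD (D : Diagram) : Set Diagram := {T | Relation.ReflTransGen GStep D T}

/-- Maximum number of ghost cells over `KKD D`. -/
noncomputable def MaxG (D : Diagram) : ℕ :=
  sSup {n | ∃ T ∈ KKD D, T.ghosts.card = n}

/-- Maximum number of ghost cells over `GKD D`. -/
noncomputable def MaxGhat (D : Diagram) : ℕ :=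
  sSup {n | ∃ T ∈ GKD D, T.ghosts.card = n}

/-- Dark clouds of a ghost-free diagram: working from the top row down, mark in
each row the rightmost cell having no marked cell above it in its column. -/
def dark (D : Finset (ℕ × ℕ)) : Finset (ℕ × ℕ) :=
  ((List.range (D.sup Prod.fst + 1)).reverse).foldl
    (fun acc r =>
      let cand := (D.filter (fun p => p.1 = r ∧ ∀ q ∈ acc, q.2 ≠ p.2)).image Prod.snd
      if h : cand.Nonempty then insert (r, cand.max' h) acc else acc) ∅

/-- Snowflakes of the snow diagram: empty positions lying below a dark cloud
in its column. -/
def snowflakes (D : Finset (ℕ × ℕ)) : Finset (ℕ × ℕ) :=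
  ((Finset.range (D.sup Prod.fst + 1)) ×ˢ (D.image Prod.snd)).filter
    (fun p => 1 ≤ p.1 ∧ p ∉ D ∧ ∃ q ∈ dark D, q.2 = p.2 ∧ p.1 < q.1)

/-- Number of snowflakes of the snow diagram of a ghost-free diagram. -/
def sf (D : Finset (ℕ × ℕ)) : ℕ := (snowflakes D).card

/-- A generalized skew diagram: each nonempty row is a contiguous run of cells,
and both leftmost and rightmost columns weakly increase with the row index. -/
def IsGenSkew (D : Finset (ℕ × ℕ)) : Prop :=
  (∀ p ∈ D, 1 ≤ p.1 ∧ 1 ≤ p.2) ∧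
  (∀ r c₁ c c₂, (r, c₁) ∈ D → (r, c₂) ∈ D → c₁ ≤ c → c ≤ c₂ → (r, c) ∈ D) ∧
  (∀ r₁ r₂ c₁, r₁ < r₂ → (r₁, c₁) ∈ D → (∃ c, (r₂, c) ∈ D) →
      ∃ c₂, c₁ ≤ c₂ ∧ (r₂, c₂) ∈ D) ∧
  (∀ r₁ r₂ c₂, r₁ < r₂ → (r₂, c₂) ∈ D → (∃ c, (r₁, c) ∈ D) →
      ∃ c₁, c₁ ≤ c₂ ∧ (r₁, c₁) ∈ D)

/-- `Key(D)`: the minimal key diagram containing `D`. -/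
def keyOf (D : Finset (ℕ × ℕ)) : Finset (ℕ × ℕ) :=
  D.biUnion (fun p => (Finset.Icc 1 p.2).image (fun c => (p.1, c)))

/-- Largest index `i < j` (0-indexed) with `α_i > 0`. -/
def prevIdx (α : List ℕ) (j : ℕ) : Option ℕ :=
  ((List.range j).filter (fun i => 0 < α.getD i 0)).max?

/-- Contribution of step 2 of the skew-diagram construction at (0-indexed) row `j`. -/
def step2contrib (α : List ℕ) (j : ℕ) : ℕ :=
  if 0 < α.getD j 0 then
    match prevIdx α j with
    | none => 0
    | some i => α.getD i 0 - α.getD j 0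
  else 0

/-- Total rightward shift of (0-indexed) row `k` in the skew-diagram construction. -/
def rowShift (α : List ℕ) (k : ℕ) : ℕ :=
  (∑ j ∈ Finset.range (k + 1), step2contrib α j) +
    ((List.range k).filter (fun i => α.getD i 0 = 0)).length

/-- The skew diagram `S(α)` of a weak composition `α`. -/
def skewDiagram (α : List ℕ) : Finset (ℕ × ℕ) :=
  (Finset.range α.length).biUnion (fun i =>
    (Finset.Icc 1 (α.getD i 0)).image (fun c => (i + 1, c + rowShift α i)))

/-- The lock diagram of a weak composition `α`: `α_i` right-justified cells in row `i`. -/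
def lockDiagram (α : List ℕ) : Finset (ℕ × ℕ) :=
  (Finset.range α.length).biUnion (fun i =>
    (Finset.range (α.getD i 0)).image (fun j => (i + 1, α.foldr max 0 - j)))

/-- `L` is a lock-tableau labeling of content `α` on the given set of cells. -/
def IsLockLabeling (α : List ℕ) (cells : Finset (ℕ × ℕ)) (L : ℕ × ℕ → ℕ) : Prop :=
  (∀ p ∈ cells, 1 ≤ L p ∧ L p ≤ α.length) ∧
  (∀ j, 1 ≤ j → j ≤ α.length → 0 < α.getD (j - 1) 0 →
    ∀ c, α.foldr max 0 - α.getD (j - 1) 0 + 1 ≤ c → c ≤ α.foldr max 0 →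
      ∃! p, p ∈ cells ∧ p.2 = c ∧ L p = j) ∧
  (∀ p ∈ cells, p.1 ≤ L p) ∧
  (∀ p ∈ cells, ∀ q ∈ cells, L p = L q → p.2 < q.2 → q.1 ≤ p.1) ∧
  (∀ p ∈ cells, ∀ q ∈ cells, p.2 = q.2 → p.1 < q.1 → L p < L q)

/-- Label of the position `(r,c)` of `T`: for a ghost cell, the label of the
highest non-ghost cell weakly below it in column `c`. -/
def ghostLabel (T : Diagram) (L : ℕ × ℕ → ℕ) (r c : ℕ) : ℕ :=
  L (((T.cells \ T.ghosts).filter (fun p => p.2 = c ∧ p.1 ≤ r)).sup Prod.fst, c)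

/-- The labels, within one column with row set `Rc`, of the modified snow
diagram, where `U` is the set of rows occupied in later columns; rows are
processed from top to bottom. -/
def colLabelList (Rc U : Finset ℕ) : List (ℕ × ℕ) :=
  ((Rc.sort (· ≤ ·)).reverse).foldl
    (fun acc r =>
      if r ∈ U then (r, r) :: acc
      else
        let cand := U.filter (fun s => s < r ∧ ∀ q ∈ acc, q.2 ≠ s)
        if h : cand.Nonempty then (r, cand.max' h) :: acc else (r, 1) :: acc)
    []

/-- The label of a cell `p ∈ D` in the modified snow diagram `snow-hat(D)`. -/
def hatLabel (D : Finset (ℕ × ℕ)) (p : ℕ × ℕ) : ℕ :=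
  ((colLabelList ((D.filter (fun q => q.2 = p.2)).image Prod.fst)
      ((D.filter (fun q => p.2 < q.2)).image Prod.fst)).lookup p.1).getD 0

/-- Number of snowflakes of the modified snow diagram `snow-hat(D)`. -/
def sfhat (D : Finset (ℕ × ℕ)) : ℕ :=
  (((Finset.range (D.sup Prod.fst + 1)) ×ˢ (D.image Prod.snd)).filter
    (fun p => 1 ≤ p.1 ∧ p ∉ D ∧
      ∃ q ∈ D, q.2 = p.2 ∧ p.1 < q.1 ∧ hatLabel D q ≤ p.1)).card

/-- Cells of `D` that are rightmost in their row. -/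
def rmostCells (D : Finset (ℕ × ℕ)) : Finset (ℕ × ℕ) :=
  D.filter (fun p => ∀ q ∈ D, q.1 = p.1 → q.2 ≤ p.2)

/-- `S(D)`: cells that are not rightmost in their row and such that no cell
above them in their column is rightmost in its row. -/
def SofD (D : Finset (ℕ × ℕ)) : Finset (ℕ × ℕ) :=
  D.filter (fun p => p ∉ rmostCells D ∧
    ∀ q ∈ D, q.2 = p.2 → p.1 < q.1 → q ∉ rmostCells D)

/-- Restriction of `D` to the columns in `C`. -/
def Res (D : Finset (ℕ × ℕ)) (C : Finset ℕ) : Finset (ℕ × ℕ) :=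
  D.filter (fun p => p.2 ∈ C)

open Classical in
/-- The ghost move at row `r`, as a function (identity when no move is possible). -/
noncomputable def gmove (T : Diagram) (r : ℕ) : Diagram :=
  if h : ∃ p : ℕ × ℕ, KohnertMovable T r p.1 p.2 then
    applyGhost T r h.choose.1 h.choose.2
  else T

/-!
When every column of `D` holds a single cell, the dark clouds are the rightmost cells of the
nonempty rows, so the snowflakes are the positions below them. Along any sequence of K-Kohnert
moves each column keeps exactly one non-ghost cell, so every move drops a cell by one row; and
among the columns coming from one row `r₀` of `D`, a column further right lies weakly below every
column to its left, and strictly below its ghosts. Hence the ghosts coming from row `r₀` occupy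
distinct rows in `2, …, r₀`, and moving each of them one row down into the last column of row
`r₀` maps them injectively to snowflakes.
-/

section Snow

variable {D : Finset (ℕ × ℕ)}

def darkStep (D acc : Finset (ℕ × ℕ)) (r : ℕ) : Finset (ℕ × ℕ) :=
  let cand := (D.filter (fun p => p.1 = r ∧ ∀ q ∈ acc, q.2 ≠ p.2)).image Prod.snd
  if h : cand.Nonempty then insert (r, cand.max' h) acc else acc

theorem dark_eq_foldl (D : Finset (ℕ × ℕ)) :
    dark D = ((List.range (D.sup Prod.fst + 1)).reverse).foldl (darkStep D) ∅ := rfl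

theorem mem_darkStep {acc : Finset (ℕ × ℕ)} {r : ℕ} {q : ℕ × ℕ} (hq : q ∈ darkStep D acc r) :
    q ∈ acc ∨ q.1 = r ∧ q ∈ D := by
  dsimp only [darkStep] at hq
  split_ifs at hq with hne
  · obtain rfl | hq := mem_insert.mp hq
    · obtain ⟨p, hp, hpc⟩ := mem_image.mp (max'_mem _ hne)
      obtain ⟨hpD, hpr, -⟩ := mem_filter.mp hp
      exact Or.inr ⟨rfl, by rwa [← hpc, ← hpr]⟩
    · exact Or.inl hq
  · exact Or.inl hq

theorem subset_darkStep (acc : Finset (ℕ × ℕ)) (r : ℕ) : acc ⊆ darkStep D acc r := by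
  dsimp only [darkStep]
  split_ifs
  exacts [subset_insert _ _, Subset.rfl]

theorem mem_darkStep_self {acc : Finset (ℕ × ℕ)} {r c : ℕ} (hrc : (r, c) ∈ D)
    (hmax : ∀ c', (r, c') ∈ D → c' ≤ c) (hfree : ∀ q ∈ acc, q.2 ≠ c) :
    (r, c) ∈ darkStep D acc r := by
  set cand := (D.filter (fun p => p.1 = r ∧ ∀ q ∈ acc, q.2 ≠ p.2)).image Prod.snd with hcand
  have hc : c ∈ cand := mem_image.mpr ⟨(r, c), mem_filter.mpr ⟨hrc, rfl, hfree⟩, rfl⟩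
  have hne : cand.Nonempty := ⟨c, hc⟩
  have hmax' : cand.max' hne = c := by
    refine le_antisymm (max'_le _ _ _ fun c' hc' => ?_) (le_max' _ _ hc)
    obtain ⟨p, hp, rfl⟩ := mem_image.mp hc'
    obtain ⟨hpD, hpr, -⟩ := mem_filter.mp hp
    exact hmax p.2 (hpr ▸ hpD)
  simp only [darkStep, ← hcand, dif_pos hne, hmax', mem_insert_self]

theorem subset_foldl_darkStep (l : List ℕ) (acc : Finset (ℕ × ℕ)) :
    acc ⊆ l.foldl (darkStep D) acc := by
  induction l generalizing acc with
  | nil => exact Subset.rfl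
  | cons r l ih => exact (subset_darkStep acc r).trans (ih _)

theorem foldl_darkStep_subset (l : List ℕ) {acc : Finset (ℕ × ℕ)} (hacc : acc ⊆ D) :
    l.foldl (darkStep D) acc ⊆ D := by
  induction l generalizing acc with
  | nil => exact hacc
  | cons r l ih =>
    refine ih fun q hq => ?_
    rcases mem_darkStep hq with hq | ⟨-, hq⟩
    exacts [hacc hq, hq]

theorem dark_subset (D : Finset (ℕ × ℕ)) : dark D ⊆ D :=
  foldl_darkStep_subset _ (empty_subset _)

/-- Rows are processed from the top down, so the clouds already placed lie above all rows
still to come. -/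
theorem mem_foldl_darkStep {r c : ℕ} (hrc : (r, c) ∈ D) (hmax : ∀ c', (r, c') ∈ D → c' ≤ c)
    (htop : ∀ r', (r', c) ∈ D → r' ≤ r) (l : List ℕ) (hl : l.Pairwise (· > ·)) (hr : r ∈ l)
    {acc : Finset (ℕ × ℕ)} (hacc : acc ⊆ D) (habove : ∀ q ∈ acc, ∀ x ∈ l, x < q.1) :
    (r, c) ∈ l.foldl (darkStep D) acc := by
  induction l generalizing acc with
  | nil => simp at hr
  | cons a l ih =>
    obtain ⟨hal, hl⟩ := List.pairwise_cons.mp hl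
    rcases List.mem_cons.mp hr with rfl | hr
    · refine subset_foldl_darkStep l _ (mem_darkStep_self hrc hmax fun q hq hqc => ?_)
      have hq₁ := habove q hq r List.mem_cons_self
      have := htop q.1 (hqc ▸ hacc hq)
      omega
    · refine ih hl hr ((foldl_darkStep_subset [a] hacc)) fun q hq x hx => ?_
      rcases mem_darkStep hq with hq | ⟨hqa, -⟩
      · exact habove q hq x (List.mem_cons_of_mem a hx)
      · exact hqa ▸ hal x hx

theorem mem_dark_of_forall_le {r c : ℕ} (hrc : (r, c) ∈ D) (hmax : ∀ c', (r, c') ∈ D → c' ≤ c)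
    (htop : ∀ r', (r', c) ∈ D → r' ≤ r) : (r, c) ∈ dark D := by
  rw [dark_eq_foldl]
  refine mem_foldl_darkStep hrc hmax htop _ ?_ ?_ (empty_subset _) (by simp)
  · exact List.pairwise_reverse.mpr List.pairwise_lt_range
  · rw [List.mem_reverse, List.mem_range, Nat.lt_succ_iff]
    exact le_sup (f := Prod.fst) hrc

theorem mem_snowflakes_of_lt {q : ℕ × ℕ} (hq : q ∈ dark D) {r : ℕ} (hr₁ : 1 ≤ r) (hrq : r < q.1)
    (hrD : (r, q.2) ∉ D) : (r, q.2) ∈ snowflakes D := by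
  have hqD := dark_subset D hq
  have hq₁ : q.1 ≤ D.sup Prod.fst := le_sup hqD
  simp only [snowflakes, mem_filter, mem_product, mem_range, mem_image]
  exact ⟨⟨by omega, q, hqD, rfl⟩, hr₁, hrD, q, hq, rfl, hrq⟩

end Snow

section SingleCellColumns

variable {D : Finset (ℕ × ℕ)}

def lastCol (D : Finset (ℕ × ℕ)) (r : ℕ) : ℕ :=
  (D.filter (fun p => p.1 = r)).sup Prod.snd

def colRow (D : Finset (ℕ × ℕ)) (c : ℕ) : ℕ :=
  (D.filter (fun p => p.2 = c)).sup Prod.fst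

theorem le_lastCol {r c : ℕ} (h : (r, c) ∈ D) : c ≤ lastCol D r := by
  have hmem : (r, c) ∈ D.filter (fun p => p.1 = r) := mem_filter.mpr ⟨h, rfl⟩
  exact le_sup (f := Prod.snd) hmem

theorem lastCol_mem {r c : ℕ} (h : (r, c) ∈ D) : (r, lastCol D r) ∈ D := by
  have hne : (D.filter (fun p => p.1 = r)).Nonempty := ⟨_, mem_filter.mpr ⟨h, rfl⟩⟩
  obtain ⟨p, hp, hpc⟩ := exists_mem_eq_sup _ hne Prod.snd
  obtain ⟨hpD, rfl⟩ := mem_filter.mp hp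
  rwa [lastCol, hpc]

theorem colRow_eq (hcol : ∀ r₁ r₂ c, (r₁, c) ∈ D → (r₂, c) ∈ D → r₁ = r₂) {r c : ℕ}
    (h : (r, c) ∈ D) : colRow D c = r := by
  have hmem : (r, c) ∈ D.filter (fun p => p.2 = c) := mem_filter.mpr ⟨h, rfl⟩
  refine le_antisymm (Finset.sup_le fun p hp => ?_) (le_sup (f := Prod.fst) hmem)
  obtain ⟨hpD, rfl⟩ := mem_filter.mp hp
  exact (hcol _ _ _ hpD h).le

theorem lastCol_mem_dark (hcol : ∀ r₁ r₂ c, (r₁, c) ∈ D → (r₂, c) ∈ D → r₁ = r₂) {r c : ℕ}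
    (h : (r, c) ∈ D) : (r, lastCol D r) ∈ dark D :=
  mem_dark_of_forall_le (lastCol_mem h) (fun _ => le_lastCol)
    fun _ h' => (hcol _ _ _ h' (lastCol_mem h)).le

end SingleCellColumns

theorem injOn_snd_insert_erase {α β : Type*} [DecidableEq α] [DecidableEq β]
    {N : Finset (α × β)} (h : Set.InjOn Prod.snd (N : Set (α × β))) {a a' : α} {b : β}
    (hab : (a, b) ∈ N) : Set.InjOn Prod.snd (↑(insert (a', b) (N.erase (a, b))) : Set (α × β)) := by
  have hother : ∀ q ∈ N.erase (a, b), q.2 ≠ b := fun q hq hqb =>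
    (mem_erase.mp hq).1 (h (mem_of_mem_erase hq) hab hqb)
  rw [coe_insert, Set.injOn_insert fun h' => hother _ (mem_coe.mp h') rfl]
  refine ⟨h.mono (coe_subset.mpr (erase_subset _ _)), ?_⟩
  rintro ⟨q, hq, hqb⟩
  exact hother q hq hqb

theorem KStep.exists_move {T T' : Diagram} (h : KStep T T') :
    ∃ r c rhat, KohnertMovable T r c rhat ∧
      T'.cells ⊆ insert (rhat, c) T.cells ∧
      T'.ghosts ⊆ insert (r, c) T.ghosts ∧
      T'.cells \ T'.ghosts ⊆ insert (rhat, c) ((T.cells \ T.ghosts).erase (r, c)) ∧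
      (T.ghosts ⊆ T.cells → T'.ghosts ⊆ T'.cells) := by
  obtain ⟨r, c, rhat, hm, rfl | rfl⟩ := h <;> refine ⟨r, c, rhat, hm, ?_, ?_, ?_, ?_⟩
  · exact insert_subset_insert _ (erase_subset _ _)
  · exact subset_insert _ _
  · intro p
    simp only [applyKohnert, mem_sdiff, mem_insert, mem_erase]
    tauto
  · refine fun hg g hg' => mem_insert_of_mem (mem_erase.mpr ⟨?_, hg hg'⟩)
    rintro rfl
    exact hm.2.1 hg'
  · exact Subset.rfl
  · exact Subset.rfl
  · intro p
    simp only [applyGhost, mem_sdiff, mem_insert, mem_erase]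
    tauto
  · exact fun hg => insert_subset (mem_insert_of_mem hm.1.1) (hg.trans (subset_insert _ _))

structure MoveInvariant (D : Finset (ℕ × ℕ)) (T : Diagram) : Prop where
  ghosts_subset : T.ghosts ⊆ T.cells
  exists_origin : ∀ p ∈ T.cells, ∃ r₀, (r₀, p.2) ∈ D ∧ p.1 ≤ r₀
  two_le_of_mem_ghosts : ∀ p ∈ T.ghosts, 2 ≤ p.1
  injOn_snd : Set.InjOn Prod.snd (↑(T.cells \ T.ghosts) : Set (ℕ × ℕ))
  le_of_col_lt : ∀ {r₀ c c' a b}, c < c' → (r₀, c) ∈ D → (r₀, c') ∈ D →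
    (a, c') ∈ T.cells → (b, c) ∈ T.cells → a ≤ b
  lt_of_col_lt : ∀ {r₀ c c' a b}, c < c' → (r₀, c) ∈ D → (r₀, c') ∈ D →
    (a, c') ∈ T.cells → (b, c) ∈ T.ghosts → a < b

namespace MoveInvariant

variable {D : Finset (ℕ × ℕ)} {T T' : Diagram}

theorem init (hcol : ∀ r₁ r₂ c, (r₁, c) ∈ D → (r₂, c) ∈ D → r₁ = r₂) :
    MoveInvariant D ⟨D, ∅⟩ where
  ghosts_subset := empty_subset _
  exists_origin p hp := ⟨p.1, hp, le_rfl⟩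
  two_le_of_mem_ghosts p hp := absurd hp (notMem_empty p)
  injOn_snd p hp q hq h := by
    simp only [sdiff_empty, mem_coe] at hp hq
    exact Prod.ext (hcol _ _ _ (h ▸ hp) hq) h
  le_of_col_lt _ hD hD' ha hb := (hcol _ _ _ ha hD').trans (hcol _ _ _ hb hD).symm |>.le
  lt_of_col_lt _ _ _ _ hb := absurd hb (notMem_empty _)

/-- A single non-ghost cell per column means there are no non-ghost cells to jump over. -/
theorem succ_eq_of_movable (hI : MoveInvariant D T) {r c rhat : ℕ}
    (hm : KohnertMovable T r c rhat) : rhat + 1 = r := by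
  obtain ⟨⟨hrc, -⟩, hng, -, hlt, -, hbetween⟩ := hm
  by_contra hne
  obtain ⟨hcell, hghost⟩ := hbetween (rhat + 1) (Nat.lt_succ_self _) (by omega)
  have hmoved : (r, c) ∈ T.cells \ T.ghosts := mem_sdiff.mpr ⟨hrc, hng⟩
  exact hne (congrArg Prod.fst (hI.injOn_snd (mem_sdiff.mpr ⟨hcell, hghost⟩) hmoved rfl))

theorem lt_of_movable (hI : MoveInvariant D T) {r c rhat : ℕ} (hm : KohnertMovable T r c rhat)
    {r₀ c' a : ℕ} (hc : c < c') (hD : (r₀, c) ∈ D) (hD' : (r₀, c') ∈ D)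
    (ha : (a, c') ∈ T.cells) : a < r :=
  (hI.le_of_col_lt hc hD hD' ha hm.1.1).lt_of_ne (by rintro rfl; exact hm.1.2 c' hc ha)

theorem step (hI : MoveInvariant D T) (h : KStep T T') : MoveInvariant D T' := by
  obtain ⟨r, c, rhat, hm, hcells, hghosts, hnonghosts, hsub⟩ := h.exists_move
  obtain rfl := hI.succ_eq_of_movable hm
  have hrhat : 1 ≤ rhat := hm.2.2.1
  have hmoved : (rhat + 1, c) ∈ T.cells \ T.ghosts := mem_sdiff.mpr ⟨hm.1.1, hm.2.1⟩
  refine ⟨hsub hI.ghosts_subset, fun p hp => ?_, fun p hp => ?_, ?_, ?_, ?_⟩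
  · rcases mem_insert.mp (hcells hp) with rfl | hp
    · obtain ⟨r₀, hr₀, hle⟩ := hI.exists_origin _ hm.1.1
      exact ⟨r₀, hr₀, by dsimp only at hle ⊢; omega⟩
    · exact hI.exists_origin p hp
  · rcases mem_insert.mp (hghosts hp) with rfl | hp
    · dsimp only; omega
    · exact hI.two_le_of_mem_ghosts p hp
  · exact (injOn_snd_insert_erase hI.injOn_snd hmoved).mono (coe_subset.mpr hnonghosts)
  · intro r₀ c₁ c₂ a b h12 hD₁ hD₂ ha hb
    have ha' := hcells ha
    have hb' := hcells hb
    simp only [mem_insert, Prod.mk.injEq] at ha' hb'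
    rcases ha' with ⟨rfl, rfl⟩ | ha' <;> rcases hb' with ⟨rfl, rfl⟩ | hb'
    · omega
    · exact (hI.le_of_col_lt h12 hD₁ hD₂ hm.1.1 hb').trans' (Nat.le_succ _)
    · exact Nat.le_of_lt_succ (hI.lt_of_movable hm h12 hD₁ hD₂ ha')
    · exact hI.le_of_col_lt h12 hD₁ hD₂ ha' hb'
  · intro r₀ c₁ c₂ a b h12 hD₁ hD₂ ha hb
    have ha' := hcells ha
    have hb' := hghosts hb
    simp only [mem_insert, Prod.mk.injEq] at ha' hb'
    rcases ha' with ⟨rfl, rfl⟩ | ha' <;> rcases hb' with ⟨rfl, rfl⟩ | hb'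
    · omega
    · exact (hI.lt_of_col_lt h12 hD₁ hD₂ hm.1.1 hb').trans' (Nat.lt_succ_self _)
    · exact hI.lt_of_movable hm h12 hD₁ hD₂ ha'
    · exact hI.lt_of_col_lt h12 hD₁ hD₂ ha' hb'

theorem of_mem_KKD (hcol : ∀ r₁ r₂ c, (r₁, c) ∈ D → (r₂, c) ∈ D → r₁ = r₂)
    (hT : T ∈ KKD ⟨D, ∅⟩) : MoveInvariant D T := by
  induction hT with
  | refl => exact init hcol
  | tail _ hstep ih => exact ih.step hstep

theorem card_ghosts_le_sf (hcol : ∀ r₁ r₂ c, (r₁, c) ∈ D → (r₂, c) ∈ D → r₁ = r₂)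
    (hI : MoveInvariant D T) : T.ghosts.card ≤ sf D := by
  have origin : ∀ p ∈ T.ghosts, ∃ r₀, (r₀, p.2) ∈ D ∧ p.1 ≤ r₀ ∧ colRow D p.2 = r₀ := by
    intro p hp
    obtain ⟨r₀, hr₀, hle⟩ := hI.exists_origin p (hI.ghosts_subset hp)
    exact ⟨r₀, hr₀, hle, colRow_eq hcol hr₀⟩
  refine card_le_card_of_injOn (fun p => (p.1 - 1, lastCol D (colRow D p.2))) ?_ ?_
  · rintro ⟨r, c⟩ hp
    obtain ⟨r₀, hr₀, hle, hrow⟩ := origin _ hp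
    have h2 := hI.two_le_of_mem_ghosts _ hp
    dsimp only at hr₀ hle hrow h2 ⊢
    rw [hrow]
    refine mem_snowflakes_of_lt (lastCol_mem_dark hcol hr₀) (by omega) (by dsimp only; omega)
      fun hmem => ?_
    have := hcol _ _ _ hmem (lastCol_mem hr₀)
    omega
  · rintro ⟨r, c⟩ hp ⟨r', c'⟩ hq heq
    obtain ⟨r₀, hr₀, -, hrow⟩ := origin _ hp
    obtain ⟨r₀', hr₀', -, hrow'⟩ := origin _ hq
    have h2 := hI.two_le_of_mem_ghosts _ hp
    have h2' := hI.two_le_of_mem_ghosts _ hq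
    simp only [Prod.mk.injEq, hrow, hrow'] at heq h2 h2'
    obtain rfl : r = r' := by omega
    obtain rfl : r₀ = r₀' := hcol _ _ _ (heq.2 ▸ lastCol_mem hr₀) (lastCol_mem hr₀')
    have hsub := hI.ghosts_subset
    rcases lt_trichotomy c c' with hc | rfl | hc
    · exact absurd (hI.lt_of_col_lt hc hr₀ hr₀' (hsub hq) hp) (lt_irrefl r)
    · rfl
    · exact absurd (hI.lt_of_col_lt hc hr₀' hr₀ (hsub hp) hq) (lt_irrefl r)

end MoveInvariant

theorem maxG_le_sf_of_single_cell_columns_general (D : Finset (ℕ × ℕ))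
    (hcol : ∀ r₁ r₂ c, (r₁, c) ∈ D → (r₂, c) ∈ D → r₁ = r₂) :
    MaxG ⟨D, ∅⟩ ≤ sf D := by
  refine csSup_le ⟨0, ⟨D, ∅⟩, Relation.ReflTransGen.refl, rfl⟩ ?_
  rintro n ⟨T, hT, rfl⟩
  exact (MoveInvariant.of_mem_KKD hcol hT).card_ghosts_le_sf hcol

/-- If every column of a ghost-free diagram D contains at most one
cell, then MaxG(D) ≤ sf(D). -/
theorem maxG_le_sf_of_single_cell_columns (D : Finset (ℕ × ℕ))
    (hpos : ∀ p ∈ D, 1 ≤ p.1 ∧ 1 ≤ p.2)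
    (hcol : ∀ r₁ r₂ c, (r₁, c) ∈ D → (r₂, c) ∈ D → r₁ = r₂) :
    MaxG ⟨D, ∅⟩ ≤ sf D :=
  maxG_le_sf_of_single_cell_columns_general D hcol
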